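/- Fix real numbers s, L, α with L > 0 and α > 0, and define the full SHIFT per-dimension warping w : ℝ → ℝ piecewise by: w(x) = x if x < s; w(x) = s + σ(α·((x − s)/L − 1/2)) if s ≤ x ≤ s + L; and w(x) = x − (L − 1) if x > s + L, where σ(t) = 1/(1 + exp(−t)). Then w is strictly monotone increasing on ℝ, and in particular w is injective. -/
import Mathlib

lemma sig_pos (t : ℝ) : 0 < 1 / (1 + Real.exp (-t)) := by
  positivity

lemma sig_lt_one (t : ℝ) : 1 / (1 + Real.exp (-t)) < 1 := by
  rw [div_lt_one (by positivity)]
  linarith [Real.exp_pos (-t)]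

lemma sig_strictMono : StrictMono (fun t : ℝ => 1 / (1 + Real.exp (-t))) := by
  intro a b hab
  have h : Real.exp (-b) < Real.exp (-a) := Real.exp_lt_exp.mpr (by linarith)
  have h1 : (0:ℝ) < 1 + Real.exp (-b) := by positivity
  exact one_div_lt_one_div_of_lt h1 (by linarith)

/-- The full piecewise SHIFT per-dimension warping — identity below the basin
`[s, s + L]`, sigmoid compression on the basin, and affine shift `x − (L − 1)`
above — is strictly monotone increasing, hence injective. -/
theorem shift_full_warping_strictMono (s L α : ℝ) (hL : 0 < L) (hα : 0 < α)
    (w : ℝ → ℝ)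
    (hw : ∀ x, w x =
      if x < s then x
      else if x ≤ s + L then
        s + 1 / (1 + Real.exp (-(α * ((x - s) / L - 1 / 2))))
      else x - (L - 1)) :
    StrictMono w ∧ Function.Injective w := by
  have hmono : StrictMono w := by
    intro a b hab
    rw [hw a, hw b]
    split_ifs with ha1 hb1 hb2 hb1 ha2 hb2 hb2 hb2
    · exact hab
    · linarith [sig_pos (α * ((b - s) / L - 1 / 2))]
    · linarith
    · linarith
    · have harg : α * ((a - s) / L - 1 / 2) < α * ((b - s) / L - 1 / 2) := by
        have : (a - s) / L < (b - s) / L :=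
          div_lt_div_of_pos_right (by linarith) hL
        nlinarith
      have := sig_strictMono harg
      simp only at this
      linarith
    · linarith [sig_lt_one (α * ((a - s) / L - 1 / 2))]
    · linarith
    · linarith
    · linarith
  exact ⟨hmono, hmono.injective⟩
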